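/- arXiv:math/0407505 — 3 statements merged into one kernel-verified Lean document; each statement's English description precedes it below -/
import Mathlib

section
/- For integers g ≥ 2 and N ≥ 1, there exists a group homomorphism ρ from the genus-g surface group Γ_g to GL_N(ℂ) such that the associated representation of Γ_g on ℂ^N is irreducible, i.e., the ℂ-subalgebra of Mat_N(ℂ) generated by the image of ρ is all of Mat_N(ℂ). -/
/-!
Send `X_1` to a diagonal matrix `D` with distinct eigenvalues, `X_2` to the permutation matrix `P`
of an `N`-cycle, and every other generator to `1`; the surface relation holds because each
commutator `[X_i, Y_i]` becomes trivial. Lagrange interpolation in `D` produces the diagonal matrix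
units `E_ii`, and `E_ii P^k E_jj` is a nonzero multiple of `E_ij` once `P^k` maps `i` to `j`, so
`D` and `P` already generate `Mat_N(ℂ)`.
-/

/-- The surface relation `∏ i, X i * Y i * (X i)⁻¹ * (Y i)⁻¹` in the free group on the
`2g` generators `X_1, …, X_g` (the left summands) and `Y_1, …, Y_g` (the right summands). -/
def surfaceRel (g : ℕ) : FreeGroup (Fin g ⊕ Fin g) :=
  ((List.finRange g).map (fun i =>
    FreeGroup.of (Sum.inl i) * FreeGroup.of (Sum.inr i) *
      (FreeGroup.of (Sum.inl i))⁻¹ * (FreeGroup.of (Sum.inr i))⁻¹)).prod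

def SurfaceGroup (g : ℕ) : Type :=
  PresentedGroup ({surfaceRel g} : Set (FreeGroup (Fin g ⊕ Fin g)))

instance (g : ℕ) : Group (SurfaceGroup g) :=
  inferInstanceAs (Group (PresentedGroup _))

open Polynomial Equiv

namespace Matrix

variable {n R K : Type*} [Fintype n] [DecidableEq n]

theorem aeval_diagonal [CommSemiring R] (d : n → R) (p : R[X]) :
    aeval (diagonal d) p = diagonal fun i => p.eval (d i) := by
  rw [← diagonalAlgHom_apply R, aeval_algHom_apply, aeval_pi_apply]
  simp [coe_aeval_eq_eval]

theorem permMatrix_pow [Semiring R] (σ : Perm n) (k : ℕ) :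
    (σ ^ k).permMatrix R = σ.permMatrix R ^ k := by
  induction k with
  | zero => simp
  | succ k ih => rw [pow_succ, permMatrix_mul, ih, pow_succ']

variable [Field K]

theorem single_mem_adjoin_diagonal {d : n → K} (hd : Function.Injective d) (i : n) :
    single i i 1 ∈ Algebra.adjoin K {diagonal d} := by
  have h : aeval (diagonal d) (Lagrange.basis Finset.univ d i) = single i i 1 := by
    rw [aeval_diagonal, ← diagonal_single]
    congr 1
    funext j
    by_cases hij : i = j
    · subst hij
      simp [Lagrange.eval_basis_self hd.injOn (Finset.mem_univ i)]
    · simp [Lagrange.eval_basis_of_ne hij (Finset.mem_univ j), Ne.symm hij]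
  exact h ▸ aeval_mem_adjoin_singleton K _

theorem subalgebra_eq_top_of_single_mem (S : Subalgebra K (Matrix n n K))
    (hdiag : ∀ i, single i i 1 ∈ S) (hS : ∀ i j, ∃ M ∈ S, M i j ≠ 0) : S = ⊤ := by
  have hsingle : ∀ i j, single i j 1 ∈ S := by
    intro i j
    obtain ⟨M, hM, hMij⟩ := hS i j
    have := S.smul_mem (S.mul_mem (S.mul_mem (hdiag i) hM) (hdiag j)) (M i j)⁻¹
    rwa [single_mul_mul_single, one_mul, mul_one, smul_single, smul_eq_mul,
      inv_mul_cancel₀ hMij] at this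
  refine eq_top_iff.2 fun M _ => ?_
  rw [matrix_eq_sum_single M]
  refine S.sum_mem fun i _ => S.sum_mem fun j _ => ?_
  simpa [smul_single] using S.smul_mem (hsingle i j) (M i j)

theorem adjoin_diagonal_permMatrix_eq_top {d : n → K} (hd : Function.Injective d) {σ : Perm n}
    (hσ : ∀ i j, ∃ k : ℕ, (σ ^ k) i = j) :
    Algebra.adjoin K {diagonal d, σ.permMatrix K} = ⊤ := by
  refine subalgebra_eq_top_of_single_mem _
    (fun i => Algebra.adjoin_mono (by simp) (single_mem_adjoin_diagonal hd i)) fun i j => ?_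
  obtain ⟨k, hk⟩ := hσ i j
  refine ⟨σ.permMatrix K ^ k, Subalgebra.pow_mem _ (Algebra.subset_adjoin (by simp)) k, ?_⟩
  simp [← permMatrix_pow, hk]

end Matrix

theorem exists_finRotate_pow_apply_eq {n : ℕ} (i j : Fin n) :
    ∃ k : ℕ, (finRotate n ^ k) i = j := by
  rcases lt_or_ge n 2 with hn | hn
  · have : Subsingleton (Fin n) := Fin.subsingleton_iff_le_one.2 (by omega)
    exact ⟨0, Subsingleton.elim _ _⟩
  · have hmem : ∀ x, finRotate n x ≠ x := fun x =>
      Perm.mem_support.1 (support_finRotate_of_le hn ▸ Finset.mem_univ x)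
    exact (isCycle_finRotate_of_le hn).exists_pow_eq (hmem i) (hmem j)

open Matrix

theorem exists_GL_pair_adjoin_eq_top (K : Type*) [Field K] [CharZero K] (N : ℕ) :
    ∃ A B : GL (Fin N) K,
      Algebra.adjoin K
        ({(A : Matrix (Fin N) (Fin N) K), (B : Matrix (Fin N) (Fin N) K)} : Set _) = ⊤ := by
  let d : Fin N → K := fun i => (i : ℕ) + 1
  have hd : Function.Injective d := fun i j h => Fin.ext (by simpa [d] using h)
  refine ⟨.mkOfDetNeZero (diagonal d) ?_, .mkOfDetNeZero ((finRotate N).permMatrix K) (by simp),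
    adjoin_diagonal_permMatrix_eq_top hd exists_finRotate_pow_apply_eq⟩
  simp [d, Finset.prod_ne_zero_iff, Nat.cast_add_one_ne_zero]

namespace SurfaceGroup

variable {g : ℕ} {G : Type*} [Group G]

theorem lift_sumElim_one_surfaceRel (f : Fin g → G) :
    FreeGroup.lift (Sum.elim f 1) (surfaceRel g) = 1 := by
  rw [surfaceRel, map_list_prod]
  refine List.prod_eq_one fun x hx => ?_
  obtain ⟨i, -, rfl⟩ := List.mem_map.1 (List.map_map ▸ hx)
  simp

def liftX (f : Fin g → G) : SurfaceGroup g →* G :=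
  PresentedGroup.toGroup (by simpa using lift_sumElim_one_surfaceRel f)

theorem liftX_of (f : Fin g → G) (i : Fin g) : liftX f (PresentedGroup.of (.inl i)) = f i :=
  PresentedGroup.toGroup.of _

end SurfaceGroup

theorem surfaceGroup_exists_irreducible_rep_general (g N : ℕ) (hg : 2 ≤ g) :
    ∃ ρ : SurfaceGroup g →* Matrix.GeneralLinearGroup (Fin N) ℂ,
      Algebra.adjoin ℂ
        ((fun A : Matrix.GeneralLinearGroup (Fin N) ℂ => (A : Matrix (Fin N) (Fin N) ℂ)) ''
          Set.range ρ) = ⊤ := by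
  obtain ⟨A, B, hAB⟩ := exists_GL_pair_adjoin_eq_top ℂ N
  let f : Fin g → GL (Fin N) ℂ := fun i => if (i : ℕ) = 0 then A else B
  have hA : A ∈ Set.range (SurfaceGroup.liftX f) := ⟨_, SurfaceGroup.liftX_of f ⟨0, by omega⟩⟩
  have hB : B ∈ Set.range (SurfaceGroup.liftX f) := ⟨_, SurfaceGroup.liftX_of f ⟨1, hg⟩⟩
  refine ⟨SurfaceGroup.liftX f, eq_top_iff.2 (hAB ▸ Algebra.adjoin_mono ?_)⟩
  exact Set.insert_subset (Set.mem_image_of_mem _ hA)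
    (Set.singleton_subset_iff.2 (Set.mem_image_of_mem _ hB))

/-- For `g ≥ 2` and `N ≥ 1`, the genus-`g` surface group has an irreducible
`N`-dimensional complex representation: a homomorphism to `GL_N(ℂ)` whose image
generates the full matrix algebra `Mat_N(ℂ)` as a `ℂ`-subalgebra. -/
theorem surfaceGroup_exists_irreducible_rep (g N : ℕ) (hg : 2 ≤ g) (hN : 1 ≤ N) :
    ∃ ρ : SurfaceGroup g →* Matrix.GeneralLinearGroup (Fin N) ℂ,
      Algebra.adjoin ℂ
        ((fun A : Matrix.GeneralLinearGroup (Fin N) ℂ => (A : Matrix (Fin N) (Fin N) ℂ)) ''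
          Set.range ρ) = ⊤ :=
  surfaceGroup_exists_irreducible_rep_general g N hg
end

section
/- Let G be a finite group, let γ_1,…,γ_m ∈ G be pairwise non-conjugate elements, none of which is the identity, and let P ∈ ℂ[x_1,…,x_m] be a nonzero polynomial. Then there exists a finite-dimensional complex representation V of G such that P(χ_V(γ_1) − dim V, …, χ_V(γ_m) − dim V) ≠ 0, where χ_V denotes the character of V. -/
/-!
Since `χ_V(1) = dim V` and characters are additive under direct sums, the vectors
`(χ_V(γ_i) − dim V)_i` form an additive monoid `M ⊆ ℂ^m`. A nonzero polynomial cannot vanish on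
an additive monoid spanning `ℂ^m`: writing a non-root as `∑ c_j v_j` with `v_j ∈ M`, the
polynomial `t ↦ P(∑ t_j v_j)` is nonzero, so it is nonzero at some `t ∈ ℕ^n`.

That `M` spans is the completeness of characters: if `∑ c_i χ_V(g_i) = 0` for all `V`, where
`g = (1, γ_1, …, γ_m)` are pairwise non-conjugate, then the central element
`a = ∑ c_i ∑_h h g_i h⁻¹` of `ℂ[G]` has trace zero in every representation. By Wedderburn, `a` acts
on each simple factor `M_d(ℂ)` by a scalar `μ` whose trace `d μ` vanishes, so `a = 0`; reading off
the coefficient of `g_j` gives `c_j = 0`.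
-/

open MonoidAlgebra

namespace MvPolynomial

variable {R σ : Type*} [CommRing R] [IsDomain R] [CharZero R]

theorem exists_eval_natCast_ne_zero {P : MvPolynomial σ R} (hP : P ≠ 0) :
    ∃ n : σ → ℕ, eval (fun i => (n i : R)) P ≠ 0 := by
  by_contra! h
  refine hP (funext_set (fun _ => Set.range Nat.cast)
    (fun _ => Set.infinite_range_of_injective Nat.cast_injective) fun x hx => ?_)
  choose n hn using fun i => hx i (Set.mem_univ i)
  simpa [← _root_.funext hn] using h n

theorem exists_mem_eval_ne_zero_of_span_eq_top (M : AddSubmonoid (σ → R))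
    (hM : Submodule.span R (M : Set (σ → R)) = ⊤) {P : MvPolynomial σ R} (hP : P ≠ 0) :
    ∃ x ∈ M, eval x P ≠ 0 := by
  obtain ⟨y, hy⟩ : ∃ y, eval y P ≠ 0 := by
    by_contra! h
    exact hP (MvPolynomial.funext (by simpa using h))
  obtain ⟨n, c, v, rfl⟩ := Submodule.mem_span_set'.1 (hM ▸ Submodule.mem_top : y ∈ _)
  set Q : MvPolynomial (Fin n) R := bind₁ (fun i => ∑ j, C ((v j : σ → R) i) * X j) P
  have hQ : ∀ t, eval t Q = eval (∑ j, t j • (v j : σ → R)) P := fun t => by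
    rw [eval, eval₂Hom_bind₁, ← eval]
    congr 2 with i
    simp [mul_comm]
  obtain ⟨N, hN⟩ := exists_eval_natCast_ne_zero (P := Q) (fun h => hy (by rw [← hQ, h, map_zero]))
  refine ⟨∑ j, N j • (v j : σ → R), sum_mem fun j _ => AddSubmonoid.nsmul_mem _ (v j).2 _, ?_⟩
  simpa [hQ, Nat.cast_smul_eq_nsmul] using hN

end MvPolynomial

namespace MonoidAlgebra

variable {k G : Type*} [CommSemiring k] [Group G] [Fintype G]

noncomputable def conjSum (g : G) : MonoidAlgebra k G := ∑ h : G, of k G (h * g * h⁻¹)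

theorem conjSum_mem_center (g : G) : conjSum g ∈ Subalgebra.center k (MonoidAlgebra k G) := by
  rw [Subalgebra.mem_center_iff]
  intro b
  induction b using MonoidAlgebra.induction_on with
  | of x =>
    simp only [conjSum, Finset.mul_sum, Finset.sum_mul, ← map_mul]
    exact Fintype.sum_equiv (Equiv.mulLeft x) _ _ fun h => by simp [mul_assoc]
  | add b c hb hc => rw [add_mul, mul_add, hb, hc]
  | smul r b hb => rw [smul_mul_assoc, mul_smul_comm, hb]

theorem coeff_conjSum_eq_zero {g x : G} (h : ¬IsConj g x) : (conjSum (k := k) g).coeff x = 0 := by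
  classical
  simp only [conjSum, coeff_sum, Finsupp.finsetSum_apply]
  refine Finset.sum_eq_zero fun y _ => ?_
  rw [of_apply, coeff_single, Finsupp.single_apply, if_neg]
  exact fun hy => h (isConj_iff.2 ⟨y, hy⟩)

theorem coeff_conjSum_self_ne_zero [CharZero k] (g : G) : (conjSum (k := k) g).coeff g ≠ 0 := by
  classical
  simp only [conjSum, coeff_sum, Finsupp.finsetSum_apply, of_apply, coeff_single,
    Finsupp.single_apply, Finset.sum_boole, ne_eq, Nat.cast_eq_zero, Finset.card_eq_zero]
  exact Finset.nonempty_iff_ne_empty.1 ⟨1, by simp⟩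

end MonoidAlgebra

section

variable {k G : Type} [Field k] [Group G]

theorem FDRep.trace_asAlgebraHom_conjSum [Fintype G] (V : FDRep k G) (g : G) :
    LinearMap.trace k V (Representation.asAlgebraHom V.ρ (conjSum g)) =
      Fintype.card G * V.character g := by
  calc _ = ∑ h : G, V.character (h * g * h⁻¹) := by
        simp only [conjSum, map_sum, Representation.asAlgebraHom_of]; rfl
    _ = _ := by simp [char_conj]

theorem MonoidAlgebra.eq_zero_of_mem_center_of_forall_trace_eq_zero [IsAlgClosed k] [CharZero k]
    [Finite G] {a : MonoidAlgebra k G} (ha : a ∈ Subalgebra.center k (MonoidAlgebra k G))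
    (htr : ∀ V : FDRep k G, LinearMap.trace k V (Representation.asAlgebraHom V.ρ a) = 0) :
    a = 0 := by
  obtain ⟨n, d, hd, ⟨e⟩⟩ :=
    IsSemisimpleRing.exists_algEquiv_pi_matrix_of_isAlgClosed k (MonoidAlgebra k G)
  refine e.injective (funext fun i => ?_)
  obtain ⟨μ, hμ⟩ : e a i ∈ Set.range (Matrix.scalar (Fin (d i))) := by
    rw [← Matrix.center_eq_range, Semigroup.mem_center_iff]
    intro N
    simpa using congr_fun (congr_arg e (Subalgebra.mem_center_iff.1 ha (e.symm (Pi.single i N)))) i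
  let π : MonoidAlgebra k G →ₐ[k] Module.End k (Fin (d i) → k) :=
    Matrix.toLinAlgEquiv'.toAlgHom.comp ((Pi.evalAlgHom k _ i).comp e.toAlgHom)
  have hπa : π a = Matrix.toLin' (Matrix.scalar (Fin (d i)) μ) := by
    simp [π, ← hμ]; rfl
  have hdμ : (d i : k) * μ = 0 := by
    simpa [Representation.asAlgebraHom_def, hπa, Matrix.trace_toLin'_eq] using
      htr (FDRep.of ((MonoidAlgebra.lift k _ G).symm π))
  have hμ0 : μ = 0 := by simpa [NeZero.ne] using hdμ
  simp [← hμ, hμ0]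

variable (k) in
def FDRep.characterValues {ι : Type*} (g : ι → G) : AddSubmonoid (ι → k) where
  carrier := Set.range fun V : FDRep k G => fun i => V.character (g i)
  zero_mem' := ⟨FDRep.of (Representation.trivial k G (Fin 0 → k)), by ext; simp [character]⟩
  add_mem' := by
    rintro _ _ ⟨V, rfl⟩ ⟨W, rfl⟩
    refine ⟨FDRep.of (Representation.prod V.ρ W.ρ), ?_⟩
    ext i
    exact LinearMap.trace_prodMap' _ _

theorem FDRep.span_characterValues_eq_top [IsAlgClosed k] [CharZero k] [Fintype G] {ι : Type*}
    [Finite ι] (g : ι → G) (hg : Pairwise fun i j => ¬IsConj (g i) (g j)) :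
    Submodule.span k (characterValues k g : Set (ι → k)) = ⊤ := by
  classical
  cases nonempty_fintype ι
  rw [← Submodule.dualAnnihilator_eq_bot_iff, Submodule.eq_bot_iff]
  intro φ hφ
  rw [Submodule.mem_dualAnnihilator] at hφ
  set c : ι → k := fun i => φ (Pi.single i 1)
  have hφc : ∀ x, φ x = ∑ i, x i * c i := fun x => by
    rw [LinearMap.pi_apply_eq_sum_univ φ x]
    congr! with i _ j
    simp [Pi.single_apply, eq_comm]
  have hvanish : ∀ V : FDRep k G, ∑ i, V.character (g i) * c i = 0 := fun V => by
    rw [← hφc]; exact hφ _ (Submodule.subset_span ⟨V, rfl⟩)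
  let a : MonoidAlgebra k G := ∑ i, c i • conjSum (g i)
  have ha : a = 0 := by
    refine MonoidAlgebra.eq_zero_of_mem_center_of_forall_trace_eq_zero
      (sum_mem fun i _ => Subalgebra.smul_mem _ (conjSum_mem_center _) _) fun V => ?_
    simp only [a, map_sum, map_smul, trace_asAlgebraHom_conjSum, smul_eq_mul]
    calc ∑ i, c i * (Fintype.card G * V.character (g i))
        = Fintype.card G * ∑ i, V.character (g i) * c i := by
          rw [Finset.mul_sum]; congr! 1; ring
      _ = 0 := by rw [hvanish, mul_zero]
  have hc : c = 0 := funext fun j => by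
    have := congrArg (fun a => a.coeff (g j)) ha
    simp only [a, coeff_sum, coeff_smul, Finsupp.finsetSum_apply, Finsupp.smul_apply,
      coeff_zero, Finsupp.coe_zero, Pi.zero_apply] at this
    rw [Finset.sum_eq_single j (fun i _ hij => by rw [coeff_conjSum_eq_zero (hg hij), smul_zero])
      (by simp)] at this
    exact (smul_eq_zero.1 this).resolve_right (coeff_conjSum_self_ne_zero _)
  exact LinearMap.ext fun x => by simp [hφc, hc]

end

theorem pairwise_not_isConj_cons_one {G : Type*} [Group G] {n : ℕ} {γ : Fin n → G}
    (hconj : Pairwise fun i j => ¬IsConj (γ i) (γ j)) (hne : ∀ i, γ i ≠ 1) :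
    Pairwise fun i j =>
      ¬IsConj ((Fin.cons 1 γ : Fin (n + 1) → G) i) ((Fin.cons 1 γ : Fin (n + 1) → G) j) := by
  intro i j hij
  cases i using Fin.cases <;> cases j using Fin.cases
  · exact absurd rfl hij
  · simpa [isConj_one_left] using (hne _).symm
  · simpa [isConj_one_right] using hne _
  · exact hconj (fun h => hij (congrArg _ h))

/-- If `γ_1, …, γ_m` are pairwise non-conjugate nontrivial elements of a finite group
`G` and `P` is a nonzero complex polynomial in `m` variables, then there is a
finite-dimensional complex representation `V` of `G` with
`P(χ_V(γ_1) − dim V, …, χ_V(γ_m) − dim V) ≠ 0`. -/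
theorem finiteGroup_character_polynomial {G : Type} [Group G] [Finite G]
    (m : ℕ) (γ : Fin m → G)
    (hconj : ∀ i j, i ≠ j → ¬IsConj (γ i) (γ j)) (hne : ∀ i, γ i ≠ 1)
    (P : MvPolynomial (Fin m) ℂ) (hP : P ≠ 0) :
    ∃ V : FDRep ℂ G,
      MvPolynomial.eval
        (fun i => FDRep.character V (γ i) - (Module.finrank ℂ V : ℂ)) P ≠ 0 := by
  cases nonempty_fintype G
  let π : (Fin (m + 1) → ℂ) →ₗ[ℂ] Fin m → ℂ :=
    LinearMap.pi fun i : Fin m =>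
      LinearMap.proj (R := ℂ) (φ := fun _ => ℂ) i.succ - LinearMap.proj 0
  have hπ : Function.Surjective π := fun y => ⟨Fin.cons 0 y, by ext i; simp [π]⟩
  have hspan : Submodule.span ℂ
      ((FDRep.characterValues ℂ (Fin.cons 1 γ : Fin (m + 1) → G)).map π.toAddMonoidHom :
        Set (Fin m → ℂ)) = ⊤ := by
    rw [AddSubmonoid.coe_map, LinearMap.toAddMonoidHom_coe, Submodule.span_image,
      FDRep.span_characterValues_eq_top _ (pairwise_not_isConj_cons_one hconj hne),
      Submodule.map_top, LinearMap.range_eq_top.2 hπ]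
  obtain ⟨_, ⟨_, ⟨V, rfl⟩, rfl⟩, hV⟩ :=
    MvPolynomial.exists_mem_eval_ne_zero_of_span_eq_top _ hspan hP
  have hπV : π (fun j => V.character ((Fin.cons 1 γ : Fin (m + 1) → G) j)) =
      fun i => V.character (γ i) - (Module.finrank ℂ V : ℂ) := by
    ext i
    simp [π, FDRep.char_one]
  exact ⟨V, by simpa only [LinearMap.toAddMonoidHom_coe, hπV] using hV⟩
end

section
/- For every integer N ≥ 1 and every matrix A ∈ SL_N(ℂ) (i.e., det A = 1), there exist invertible matrices X, Y ∈ GL_N(ℂ) such that X Y X^{-1} Y^{-1} = A. -/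
/-!
If `A = B * C` with `B` conjugate to a diagonal matrix `diagonal μ` and `C` conjugate to
`diagonal μ⁻¹` (`IsConjDiagonalInvProduct A`), then `C` is conjugate to `B⁻¹`, say
`C = Y * B⁻¹ * Y⁻¹`, and `A = B * Y * B⁻¹ * Y⁻¹`.

Every matrix of determinant one has such a factorization, by induction on the size. A scalar
matrix `a • 1` with `a ^ N = 1` is `diagonal (a⁻ⁱ) * diagonal (aⁱ⁺¹)`, and the second factor is a
cyclic permutation of `diagonal (aⁱ)`. A non-scalar matrix is conjugate to one with a diagonal
entry `1`, that is, to a block matrix `[[D, c], [b, 1]]`. Its Schur complement `D - c * b` has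
determinant one, so it factors as `B * C` by induction, and
`[[D, c], [b, 1]] = [[B, a • c], [0, a]] * [[C, 0], [a⁻¹ • b, a⁻¹]]`. If `a` is not an eigenvalue
of `B`, each block-triangular factor is conjugate to its block diagonal, hence to a diagonal matrix.
-/

open Matrix

namespace Matrix

section CommRing

variable {R : Type*} [CommRing R] {m n : Type*} [Fintype m] [DecidableEq m] [Fintype n]
  [DecidableEq n]

theorem IsConj.transpose {A B : Matrix n n R} (h : IsConj A B) : IsConj Aᵀ Bᵀ := by
  obtain ⟨c, hc⟩ := h
  let cT : (Matrix n n R)ˣ :=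
    ⟨(↑c : Matrix n n R)ᵀ, (↑c⁻¹ : Matrix n n R)ᵀ,
      by rw [← transpose_mul, c.inv_mul, transpose_one],
      by rw [← transpose_mul, c.mul_inv, transpose_one]⟩
  refine IsConj.symm ⟨cT, ?_⟩
  simp only [SemiconjBy, cT, ← transpose_mul, hc.eq]

theorem IsConj.reindex (e : m ≃ n) {A B : Matrix m m R} (h : IsConj A B) :
    IsConj (reindex e e A) (reindex e e B) :=
  (reindexAlgEquiv R R e).toRingEquiv.toMonoidHom.map_isConj h

theorem IsConj.det_eq {A B : Matrix n n R} (h : IsConj A B) : A.det = B.det :=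
  isConj_iff_eq.1 (detMonoidHom.map_isConj h)

theorem IsConj.inv {A B : Matrix n n R} (h : IsConj A B) : IsConj A⁻¹ B⁻¹ := by
  obtain ⟨c, hc⟩ := h
  refine ⟨c, ?_⟩
  rw [(Units.eq_mul_inv_iff_mul_eq c).2 hc.eq.symm, Matrix.mul_inv_rev, Matrix.mul_inv_rev,
    ← coe_units_inv, ← coe_units_inv, inv_inv]
  simp [SemiconjBy, Matrix.mul_assoc]

theorem isConj_diagonal_comp_perm (d : n → R) (σ : Equiv.Perm n) :
    IsConj (diagonal (d ∘ σ)) (diagonal d) := by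
  refine ⟨(permMatrixHom (R := R)).toHomUnits σ, ?_⟩
  simp only [SemiconjBy, MonoidHom.coe_toHomUnits, permMatrixHom_apply, Equiv.Perm.permMatrix,
    PEquiv.toMatrix_toPEquiv_mul, PEquiv.mul_toMatrix_toPEquiv]
  ext i j
  simp [diagonal_apply, Equiv.Perm.inv_def, Equiv.symm_apply_eq]

end CommRing

section Field

variable {K : Type*} [Field K] {m n : Type*} [Fintype m] [DecidableEq m] [Fintype n]
  [DecidableEq n]

theorem isConj_fromBlocks_diagonal_zero₂₁ {d : m → K} {d' : n → K}
    (h : ∀ i j, d i ≠ d' j) (u : Matrix m n K) :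
    IsConj (fromBlocks (diagonal d) u 0 (diagonal d')) (diagonal (Sum.elim d d')) := by
  -- `w` solves the Sylvester equation `diagonal d * w - w * diagonal d' = u`
  let w : Matrix m n K := of fun i j => u i j / (d i - d' j)
  have hw : u + w * diagonal d' = diagonal d * w := by
    ext i j
    simp only [add_apply, mul_diagonal, diagonal_mul, w, of_apply]
    field_simp [sub_ne_zero.2 (h i j)]
    ring
  let c : (Matrix (m ⊕ n) (m ⊕ n) K)ˣ :=
    ⟨fromBlocks 1 w 0 1, fromBlocks 1 (-w) 0 1, by simp [fromBlocks_multiply],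
      by simp [fromBlocks_multiply]⟩
  refine ⟨c, ?_⟩
  simp [SemiconjBy, c, ← fromBlocks_diagonal, fromBlocks_multiply, hw]

theorem isConj_fromBlocks_zero₂₁ {A : Matrix m m K} {D : Matrix n n K} {d : m → K} {d' : n → K}
    (hA : IsConj A (diagonal d)) (hD : IsConj D (diagonal d')) (h : ∀ i j, d i ≠ d' j)
    (u : Matrix m n K) :
    IsConj (fromBlocks A u 0 D) (diagonal (Sum.elim d d')) := by
  obtain ⟨p, hp⟩ := hA
  obtain ⟨q, hq⟩ := hD
  let c : (Matrix (m ⊕ n) (m ⊕ n) K)ˣ :=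
    ⟨fromBlocks p 0 0 q, fromBlocks ↑p⁻¹ 0 0 ↑q⁻¹, by simp [fromBlocks_multiply],
      by simp [fromBlocks_multiply]⟩
  refine IsConj.trans ⟨c, ?_⟩ (isConj_fromBlocks_diagonal_zero₂₁ h (p.val * u * q⁻¹.val))
  simp [SemiconjBy, c, fromBlocks_multiply, hp.eq, hq.eq, Matrix.mul_assoc]

theorem isConj_fromBlocks_zero₁₂ {A : Matrix m m K} {D : Matrix n n K} {d : m → K} {d' : n → K}
    (hA : IsConj A (diagonal d)) (hD : IsConj D (diagonal d')) (h : ∀ i j, d i ≠ d' j)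
    (v : Matrix n m K) :
    IsConj (fromBlocks A 0 v D) (diagonal (Sum.elim d d')) := by
  have hAt := hA.transpose
  have hDt := hD.transpose
  rw [diagonal_transpose] at hAt hDt
  simpa [fromBlocks_transpose] using (isConj_fromBlocks_zero₂₁ hAt hDt h vᵀ).transpose

def IsConjDiagonalInvProduct (A : Matrix n n K) : Prop :=
  ∃ (μ : n → K) (B C : Matrix n n K),
    IsConj B (diagonal μ) ∧ IsConj C (diagonal μ⁻¹) ∧ B * C = A

theorem IsConjDiagonalInvProduct.of_isConj {A A' : Matrix n n K} (hAA' : IsConj A A')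
    (h : IsConjDiagonalInvProduct A') : IsConjDiagonalInvProduct A := by
  obtain ⟨c, hc⟩ := hAA'
  obtain ⟨μ, B, C, hB, hC, rfl⟩ := h
  have conj_back (X : Matrix n n K) : IsConj (c⁻¹.val * X * c) X :=
    ⟨c, by simp [SemiconjBy, Matrix.mul_assoc]⟩
  refine ⟨μ, c⁻¹.val * B * c, c⁻¹.val * C * c, (conj_back B).trans hB, (conj_back C).trans hC, ?_⟩
  have hA : A = c⁻¹.val * (B * C) * c := by
    rw [Matrix.mul_assoc, ← hc.eq, Units.inv_mul_cancel_left]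
  simp [hA, Matrix.mul_assoc]

theorem IsConjDiagonalInvProduct.reindex {A : Matrix m m K} (e : m ≃ n)
    (h : IsConjDiagonalInvProduct A) : IsConjDiagonalInvProduct (Matrix.reindex e e A) := by
  obtain ⟨μ, B, C, hB, hC, rfl⟩ := h
  refine ⟨μ ∘ e.symm, Matrix.reindex e e B, Matrix.reindex e e C, ?_, ?_, ?_⟩
  · simpa using hB.reindex e
  · simpa [Pi.inv_comp] using hC.reindex e
  · simp [reindex_apply, submatrix_mul_equiv]

theorem IsConjDiagonalInvProduct.fromBlocks_one [Infinite K] {D : Matrix m m K}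
    {c : Matrix m n K} {b : Matrix n m K} (h : IsConjDiagonalInvProduct (D - c * b)) :
    IsConjDiagonalInvProduct (fromBlocks D c b (1 : Matrix n n K)) := by
  classical
  obtain ⟨μ, B, C, hB, hC, hBC⟩ := h
  have hsmul_one (x : K) : IsConj (x • (1 : Matrix n n K)) (diagonal fun _ => x) := by
    rw [smul_one_eq_diagonal]
  obtain ⟨a, ha⟩ := Infinite.exists_notMem_finset (insert 0 (Finset.univ.image μ))
  have ha0 : a ≠ 0 := by rintro rfl; simp at ha
  have hμa (i : m) : μ i ≠ a := by rintro rfl; simp at ha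
  refine ⟨Sum.elim μ fun _ => a, fromBlocks B (a • c) 0 (a • 1),
    fromBlocks C 0 (a⁻¹ • b) (a⁻¹ • 1), ?_, ?_, ?_⟩
  · exact isConj_fromBlocks_zero₂₁ hB (hsmul_one a) (fun i _ => hμa i) _
  · rw [← Sum.elim_inv_inv]
    exact isConj_fromBlocks_zero₁₂ hC (hsmul_one a⁻¹) (fun i _ => inv_injective.ne (hμa i)) _
  · rw [fromBlocks_multiply, hBC]
    simp [ha0]

theorem isConjDiagonalInvProduct_smul_one {N : ℕ} {a : K} (ha : a ^ (N + 1) = 1) :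
    IsConjDiagonalInvProduct (a • (1 : Matrix (Fin (N + 1)) (Fin (N + 1)) K)) := by
  have ha0 : a ≠ 0 := by rintro rfl; simp at ha
  let ν : Fin (N + 1) → K := fun i => a ^ (i : ℕ)
  have hrot : a • ν = ν ∘ finRotate (N + 1) := by
    ext i
    by_cases hi : i = Fin.last N
    · simp [ν, hi, ← ha, pow_succ']
    · simp only [Pi.smul_apply, Function.comp_apply, ν, coe_finRotate_of_ne_last hi, smul_eq_mul,
        pow_succ']
  refine ⟨ν⁻¹, diagonal ν⁻¹, diagonal (a • ν), IsConj.refl _, ?_, ?_⟩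
  · rw [inv_inv, hrot]
    exact isConj_diagonal_comp_perm ν _
  · rw [diagonal_mul_diagonal, smul_one_eq_diagonal]
    congr 1
    ext i
    simp only [Pi.inv_apply, Pi.smul_apply, smul_eq_mul, ν]
    field_simp

theorem isConj_toMatrix_toLin' (b : Module.Basis n K (n → K)) (A : Matrix n n K) :
    IsConj A (LinearMap.toMatrix b b (toLin' A)) := by
  let e := Pi.basisFun K n
  refine ⟨⟨b.toMatrix e, e.toMatrix b, b.toMatrix_mul_toMatrix_flip e,
    e.toMatrix_mul_toMatrix_flip b⟩, ?_⟩
  have hA := basis_toMatrix_mul_linearMap_toMatrix_mul_basis_toMatrix e b e b (toLin' A)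
  rw [LinearMap.toMatrix_eq_toMatrix', LinearMap.toMatrix'_toLin'] at hA
  change _ * A = _
  conv_lhs => rw [← hA, ← Matrix.mul_assoc, ← Matrix.mul_assoc, b.toMatrix_mul_toMatrix_flip e,
    Matrix.one_mul]

theorem exists_isConj_apply_self_eq_zero {A : Matrix n n K} (hA : ∀ a : K, A ≠ a • 1) :
    ∃ (M : Matrix n n K) (i : n), IsConj A M ∧ M i i = 0 := by
  obtain ⟨v, hv⟩ : ∃ v, LinearIndependent K ![v, A *ᵥ v] := by
    by_contra! h
    obtain ⟨a, ha⟩ := LinearMap.exists_eq_smul_id_of_forall_notLinearIndependent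
      (f := toLin' A) h
    exact hA a (by simpa using congrArg LinearMap.toMatrix' ha)
  have hv0 : v ≠ 0 := by simpa using hv.ne_zero 0
  have hs : LinearIndepOn K id {v, A *ᵥ v} :=
    linearIndepOn_id_pair hv0 ((LinearIndependent.pair_iff' hv0).1 hv)
  let b₀ := Module.Basis.extend hs
  let e := b₀.indexEquiv (Pi.basisFun K n)
  let b := b₀.reindex e
  let p : hs.extend (Set.subset_univ _) := ⟨v, hs.subset_extend _ (by simp)⟩
  let q : hs.extend (Set.subset_univ _) := ⟨A *ᵥ v, hs.subset_extend _ (by simp)⟩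
  have hpq : e p ≠ e q := e.injective.ne fun h =>
    hv.injective.ne (by decide : (0 : Fin 2) ≠ 1) (by simpa [p, q] using h)
  have hb (r) : b (e r) = r := by
    simp only [b, Module.Basis.reindex_apply, Equiv.symm_apply_apply]
    exact Module.Basis.extend_apply_self hs r
  -- in a basis containing `v` and `A *ᵥ v`, the `v`-coordinate of `A *ᵥ v` vanishes
  refine ⟨LinearMap.toMatrix b b (toLin' A), e p, isConj_toMatrix_toLin' b A, ?_⟩
  have hAv : b.repr (A *ᵥ v) = b.repr (b (e q)) := congrArg b.repr (hb q).symm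
  rw [LinearMap.toMatrix_apply, hb, toLin'_apply, hAv, b.repr_self, Finsupp.single_eq_of_ne hpq]

theorem exists_isConj_apply_self_eq {A : Matrix n n K} (hA : ∀ a : K, A ≠ a • 1) (t : K) :
    ∃ (M : Matrix n n K) (i : n), IsConj A M ∧ M i i = t := by
  obtain ⟨M, i, ⟨c, hc⟩, hMi⟩ := exists_isConj_apply_self_eq_zero (A := A - t • 1) fun a h =>
    hA (a + t) (by rw [add_smul, ← h, sub_add_cancel])
  refine ⟨M + t • 1, i, ⟨c, ?_⟩, by simp [hMi]⟩
  simpa [SemiconjBy, Matrix.mul_sub, Matrix.sub_mul, Matrix.add_mul, sub_eq_iff_eq_add] using hc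

theorem isConjDiagonalInvProduct_of_det_eq_one [Infinite K] :
    ∀ {N : ℕ} (A : Matrix (Fin N) (Fin N) K), A.det = 1 → IsConjDiagonalInvProduct A
  | 0, A, _ => ⟨0, A, 1, Subsingleton.elim A (diagonal 0) ▸ .refl _,
      Subsingleton.elim (1 : Matrix (Fin 0) (Fin 0) K) (diagonal 0⁻¹) ▸ .refl _, A.mul_one⟩
  | N + 1, A, hA => by
    by_cases hscalar : ∃ a : K, A = a • 1
    · obtain ⟨a, rfl⟩ := hscalar
      exact isConjDiagonalInvProduct_smul_one (by simpa using hA)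
    simp only [not_exists] at hscalar
    obtain ⟨M, i, hAM, hMi⟩ := exists_isConj_apply_self_eq hscalar 1
    let e : Fin N ⊕ Fin 1 ≃ Fin (N + 1) := finSumFinEquiv.trans (Equiv.swap (Fin.last N) i)
    let M' := Matrix.reindex e.symm e.symm M
    have hM' : M' = fromBlocks M'.toBlocks₁₁ M'.toBlocks₁₂ M'.toBlocks₂₁ 1 := by
      conv_lhs => rw [← fromBlocks_toBlocks M']
      congr
      ext j k
      fin_cases j; fin_cases k
      have hlast : Fin.natAdd N (0 : Fin 1) = Fin.last N := rfl
      simpa [M', e, toBlocks₂₂, hlast] using hMi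
    have hdet : (M'.toBlocks₁₁ - M'.toBlocks₁₂ * M'.toBlocks₂₁).det = 1 := by
      rw [← det_fromBlocks_one₂₂, ← hM', det_reindex_self, ← hAM.det_eq, hA]
    refine .of_isConj hAM ?_
    have := ((isConjDiagonalInvProduct_of_det_eq_one _ hdet).fromBlocks_one).reindex e
    rw [← hM'] at this
    simpa [M'] using this

theorem IsConjDiagonalInvProduct.exists_commutator_eq {A : Matrix n n K}
    (h : IsConjDiagonalInvProduct A) (hA : IsUnit A.det) :
    ∃ X Y : Matrix n n K, IsUnit X ∧ IsUnit Y ∧ X * Y * X⁻¹ * Y⁻¹ = A := by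
  obtain ⟨μ, B, C, hB, hC, rfl⟩ := h
  obtain ⟨u, rfl⟩ : IsUnit B :=
    (isUnit_iff_isUnit_det B).2 (isUnit_of_mul_isUnit_left (det_mul B C ▸ hA))
  have hμ (i : n) : μ i ≠ 0 := by
    have hdet := (isUnit_iff_isUnit_det _).1 u.isUnit
    rw [hB.det_eq, det_diagonal] at hdet
    exact Finset.prod_ne_zero_iff.1 hdet.ne_zero i (Finset.mem_univ i)
  have hinv : (diagonal μ)⁻¹ = diagonal μ⁻¹ := inv_eq_left_inv (by simp [hμ])
  have hCu : IsConj C ↑u⁻¹ := by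
    rw [coe_units_inv]
    exact hC.trans (hinv ▸ hB.inv).symm
  obtain ⟨c, hc⟩ := hCu
  refine ⟨u, ↑c⁻¹, u.isUnit, c⁻¹.isUnit, ?_⟩
  rw [← coe_units_inv, ← coe_units_inv, inv_inv, (Units.eq_inv_mul_iff_mul_eq c).2 hc.eq]
  simp [Matrix.mul_assoc]

end Field
end Matrix

theorem exists_commutator_eq_of_det_eq_one_general (N : ℕ)
    (A : Matrix (Fin N) (Fin N) ℂ) (hA : A.det = 1) :
    ∃ X Y : Matrix (Fin N) (Fin N) ℂ, IsUnit X ∧ IsUnit Y ∧ X * Y * X⁻¹ * Y⁻¹ = A :=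
  (isConjDiagonalInvProduct_of_det_eq_one A hA).exists_commutator_eq (by simp [hA])

/-- Every complex matrix of determinant `1` is a commutator of invertible matrices:
for `A ∈ SL_N(ℂ)` there are `X, Y ∈ GL_N(ℂ)` with `X Y X⁻¹ Y⁻¹ = A`. -/
theorem exists_commutator_eq_of_det_eq_one (N : ℕ) (hN : 1 ≤ N)
    (A : Matrix (Fin N) (Fin N) ℂ) (hA : A.det = 1) :
    ∃ X Y : Matrix (Fin N) (Fin N) ℂ, IsUnit X ∧ IsUnit Y ∧ X * Y * X⁻¹ * Y⁻¹ = A :=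
  exists_commutator_eq_of_det_eq_one_general N A hA
end
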